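/- arXiv:1304.3613 — 2 statements merged into one kernel-verified Lean document; each statement's English description precedes it below -/
import Mathlib

section
/- Let Π be an instance of NotAllEqual 3-SAT with n clauses and G(Π)=(V,E), b, r the associated construction. In every (b,r)-partition of E, for every clause C (original or copy), among the six edges consisting of the three triangle edges on U^C together with the three matching edges E^C, exactly three belong to the blue spanning tree and exactly three belong to the red spanning tree. -/
/-!
Common definitions for formalizing the NP-completeness reduction from
NotAllEqual 3-SAT to (b,r)-partitions of graphs.

An instance of NotAllEqual 3-SAT with variables in `α` and `n` clauses is
given by `cl : Fin n → Fin 3 → α`, clause `i` consisting of the three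
(distinct) variables `cl i 0, cl i 1, cl i 2`.

The vertex set of the associated graph `G(Π)`: the special vertex `s`,
the `u`-vertices `u i o j` and the `v`-vertices `v i o j`, where `i : Fin n`
is a clause index, `o : Bool` tells whether we are in the gadget of the
original clause (`false`) or of its copy (`true`), and `j : Fin 3` is the
position of a variable inside the clause.
-/

inductive GVert (n : ℕ) : Type
  | s : GVert n
  | u : Fin n → Bool → Fin 3 → GVert n
  | v : Fin n → Bool → Fin 3 → GVert n
  deriving DecidableEq

/-- The occurrences of the variable `x`: the pairs (clause index, position)
where `x` appears. -/
def occs {α : Type*} [DecidableEq α] {n : ℕ} (cl : Fin n → Fin 3 → α) (x : α) :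
    Finset (Fin n × Fin 3) :=
  Finset.univ.filter (fun p => cl p.1 p.2 = x)

/-- The cyclic successor of an occurrence `p` among the occurrences of the
variable sitting at `p`; this is used to build the cycle `Δ_x`. -/
noncomputable def nextOcc {α : Type*} [DecidableEq α] {n : ℕ}
    (cl : Fin n → Fin 3 → α) (p : Fin n × Fin 3) : Fin n × Fin 3 :=
  (occs cl (cl p.1 p.2)).toList.next p (by simp [occs, Finset.mem_toList])

/-- The edges of `G(Π)`: the star at `s`, the triangles on `U^C`, the
matchings `E^C`, and the cycles `Δ_x` (which alternate `v`-vertices of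
original-clause gadgets and of copy gadgets; the cycle for the variable `x`
is `v p₁ false, v p₁ true, v p₂ false, v p₂ true, …` over the occurrences
`p₁, p₂, …` of `x` in cyclic order). -/
inductive EdgeSpec {α : Type*} [DecidableEq α] {n : ℕ} (cl : Fin n → Fin 3 → α) :
    GVert n → GVert n → Prop
  | star (i : Fin n) (o : Bool) (j : Fin 3) : EdgeSpec cl .s (.u i o j)
  | tri (i : Fin n) (o : Bool) {j j' : Fin 3} (h : j ≠ j') :
      EdgeSpec cl (.u i o j) (.u i o j')
  | mat (i : Fin n) (o : Bool) (j : Fin 3) : EdgeSpec cl (.u i o j) (.v i o j)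
  | cycA (p : Fin n × Fin 3) : EdgeSpec cl (.v p.1 false p.2) (.v p.1 true p.2)
  | cycB (p : Fin n × Fin 3) :
      EdgeSpec cl (.v p.1 true p.2) (.v (nextOcc cl p).1 false (nextOcc cl p).2)

/-- The graph `G(Π)` associated to the NotAllEqual 3-SAT instance. -/
noncomputable def gadgetGraph {α : Type*} [DecidableEq α] {n : ℕ}
    (cl : Fin n → Fin 3 → α) : SimpleGraph (GVert n) :=
  SimpleGraph.fromRel (EdgeSpec cl)

/-- The blue outdegree prescription `b`. -/
def bvec (n : ℕ) : GVert n → ℕ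
  | .s => 3 * n
  | .u _ _ _ => 1
  | .v _ o _ => if o then 0 else 1

/-- The red outdegree prescription `r`. -/
def rvec (n : ℕ) : GVert n → ℕ
  | .s => 3 * n
  | .u _ _ _ => 1
  | .v _ o _ => if o then 1 else 0

/-- `dir` is an orientation of the edge set `F`: every directed pair lies in
`F`, and every edge of `F` gets exactly one direction. -/
def IsOrientation {V : Type*} (F : Set (Sym2 V)) (dir : V → V → Prop) : Prop :=
  (∀ a b, dir a b → s(a, b) ∈ F) ∧
    ∀ a b, s(a, b) ∈ F → (dir a b ∨ dir b a) ∧ ¬(dir a b ∧ dir b a)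

/-- `dir` is an `m`-orientation of `F`: an orientation in which exactly `m v`
arcs leave each vertex `v`. -/
def IsMOrientation {V : Type*} (F : Set (Sym2 V)) (m : V → ℕ)
    (dir : V → V → Prop) : Prop :=
  IsOrientation F dir ∧ ∀ v, Nat.card {w // dir v w} = m v

/-- `B` and `R` partition the edges of `G` into two spanning trees. -/
def IsTreePartition {V : Type*} (G B R : SimpleGraph V) : Prop :=
  B ≤ G ∧ R ≤ G ∧ B.IsTree ∧ R.IsTree ∧
    Disjoint B.edgeSet R.edgeSet ∧ B.edgeSet ∪ R.edgeSet = G.edgeSet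

/-- `(B, R)` is a `(b,r)`-partition of (the edge set of) `G`: a partition
into a blue spanning tree having a `b`-orientation and a red spanning tree
having an `r`-orientation. -/
def IsBRPartition {V : Type*} (G : SimpleGraph V) (b r : V → ℕ)
    (B R : SimpleGraph V) : Prop :=
  IsTreePartition G B R ∧
    (∃ d, IsMOrientation B.edgeSet b d) ∧ ∃ d, IsMOrientation R.edgeSet r d

/-- `G` admits some `(b,r)`-partition. -/
def HasBRPartition {V : Type*} (G : SimpleGraph V) (b r : V → ℕ) : Prop :=
  ∃ B R, IsBRPartition G b r B R

/-- The blue/red coloring `c` (`true` = blue, `false` = red) satisfies the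
NotAllEqual 3-SAT instance: every clause contains a blue and a red variable. -/
def NAESatisfies {α : Type*} {n : ℕ} (cl : Fin n → Fin 3 → α) (c : α → Bool) :
    Prop :=
  ∀ i : Fin n, (∃ j, c (cl i j) = true) ∧ ∃ j, c (cl i j) = false

/-- The matching edge `u^C_x v^C_x` at occurrence `p`, in the original gadget
(`o = false`) or the copy gadget (`o = true`). -/
def mEdge {n : ℕ} (p : Fin n × Fin 3) (o : Bool) : Sym2 (GVert n) :=
  s(GVert.u p.1 o p.2, GVert.v p.1 o p.2)

/-!
The special vertex `s` has `6n` neighbours and must send out `3n` blue and `3n` red arcs.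
Since no edge is both blue and red, every edge at `s` is oriented away from `s` in its colour,
so no arc ever enters `s`. Inside a clause gadget, look at the colour in which the three
`v`-vertices have outdegree `0` (red for an original clause, blue for a copy): each of the three
`u`-vertices sends exactly one arc of that colour, necessarily along a gadget edge, and every
gadget edge of that colour is such an arc. Hence that colour owns exactly three of the six gadget
edges, and the other colour owns the remaining three.
-/

open SimpleGraph Set

section Orientation

variable {V : Type*}

lemma ncard_inter_add_ncard_inter_of_subset_union {S B R : Set V} (hS : S.Finite)
    (hdisj : Disjoint B R) (hsub : S ⊆ B ∪ R) :
    (S ∩ B).ncard + (S ∩ R).ncard = S.ncard := by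
  rw [← ncard_union_eq (hdisj.mono inter_subset_right inter_subset_right)
    (hS.subset inter_subset_left) (hS.subset inter_subset_left),
    ← inter_union_distrib_left, inter_eq_self_of_subset_left hsub]

/-- The out-neighbours of `s` in the two orientations are disjoint; if their numbers add up to
the degree of `s`, they cover every neighbour, leaving no edge to point into `s`. -/
lemma not_dir_into_of_card_out_add_card_out {G B R : SimpleGraph V} (hB : B ≤ G) (hR : R ≤ G)
    (hdisj : Disjoint B.edgeSet R.edgeSet) {dB dR : V → V → Prop}
    (hdB : IsOrientation B.edgeSet dB) (hdR : IsOrientation R.edgeSet dR) {s : V}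
    (hfin : (G.neighborSet s).Finite)
    (hcard : Nat.card {w // dB s w} + Nat.card {w // dR s w} = (G.neighborSet s).ncard)
    (x : V) : ¬ dB x s := by
  intro hxs
  have hsubB : {w | dB s w} ⊆ G.neighborSet s := fun w h => hB (hdB.1 s w h)
  have hsubR : {w | dR s w} ⊆ G.neighborSet s := fun w h => hR (hdR.1 s w h)
  have hout_disj : Disjoint {w | dB s w} {w | dR s w} :=
    disjoint_left.mpr fun w hwB hwR => disjoint_left.mp hdisj (hdB.1 s w hwB) (hdR.1 s w hwR)
  have hcover : {w | dB s w} ∪ {w | dR s w} = G.neighborSet s := by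
    refine eq_of_subset_of_ncard_le (union_subset hsubB hsubR) ?_ hfin
    rw [ncard_union_eq hout_disj (hfin.subset hsubB) (hfin.subset hsubR), ← hcard]
    rfl
  have hsx : s(s, x) ∈ B.edgeSet := Sym2.eq_swap ▸ hdB.1 x s hxs
  have hx : x ∈ G.neighborSet s := hB hsx
  rw [← hcover] at hx
  rcases hx with hsx' | hsx'
  · exact (hdB.2 x s (hdB.1 x s hxs)).2 ⟨hxs, hsx'⟩
  · exact disjoint_left.mp hdisj hsx (hdR.1 s x hsx')

/-- If every vertex of `U` has exactly one out-arc, which lies in `S`, and every arc along an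
edge of `S` leaves `U`, then `u ↦ s(u, out u)` is a bijection from `U` onto `S ∩ F`. -/
lemma ncard_inter_eq_of_unique_out {F S : Set (Sym2 V)} {d : V → V → Prop}
    (hd : IsOrientation F d) {U : Set V} (hout : ∀ u ∈ U, Nat.card {w // d u w} = 1)
    (hmaps : ∀ u ∈ U, ∀ w, d u w → s(u, w) ∈ S)
    (htail : ∀ a b, s(a, b) ∈ S → d a b → a ∈ U) :
    (S ∩ F).ncard = U.ncard := by
  have hex : ∀ u ∈ U, ∃ w, d u w ∧ ∀ w', d u w' → w' = w := fun u hu => by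
    obtain ⟨⟨w, hw⟩, hall⟩ := Nat.card_eq_one_iff_exists.mp (hout u hu)
    exact ⟨w, hw, fun w' hw' => congrArg Subtype.val (hall ⟨w', hw'⟩)⟩
  choose! out hout_dir hout_uniq using hex
  have himage : S ∩ F = (fun u => s(u, out u)) '' U := by
    ext e
    induction e using Sym2.ind with
    | h a b =>
      constructor
      · rintro ⟨hS, hF⟩
        rcases (hd.2 a b hF).1 with hab | hba
        · have ha := htail a b hS hab
          exact ⟨a, ha, by rw [hout_uniq a ha b hab]⟩
        · have hb := htail b a (Sym2.eq_swap ▸ hS) hba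
          refine ⟨b, hb, show s(b, out b) = s(a, b) from ?_⟩
          rw [← hout_uniq b hb a hba, Sym2.eq_swap]
      · rintro ⟨u, hu, he⟩
        rw [← he]
        exact ⟨hmaps u hu _ (hout_dir u hu), hd.1 _ _ (hout_dir u hu)⟩
  rw [himage, InjOn.ncard_image]
  intro u hu u' hu' huu'
  rcases Sym2.eq_iff.mp huu' with ⟨h, -⟩ | ⟨h, h'⟩
  · exact h
  · have hfwd : d u u' := h' ▸ hout_dir u hu
    have hbwd : d u' u := h ▸ hout_dir u' hu'
    exact absurd ⟨hfwd, hbwd⟩ (hd.2 u u' (hd.1 u u' hfwd)).2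

end Orientation

section Gadget

variable {α : Type*} [DecidableEq α] {n : ℕ} (cl : Fin n → Fin 3 → α)

instance GVert.instFinite : Finite (GVert n) :=
  Finite.of_injective
    (fun x : GVert n => match x with
      | .s => (none : Option (Bool × Fin n × Bool × Fin 3))
      | .u i o j => some (false, i, o, j)
      | .v i o j => some (true, i, o, j))
    (by rintro (_ | ⟨⟩ | ⟨⟩) (_ | ⟨⟩ | ⟨⟩) h <;> simp_all)

def gadgetEdges (i : Fin n) (o : Bool) : Set (Sym2 (GVert n)) :=
  {s(GVert.u i o 0, GVert.u i o 1), s(GVert.u i o 1, GVert.u i o 2),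
    s(GVert.u i o 0, GVert.u i o 2), s(GVert.u i o 0, GVert.v i o 0),
    s(GVert.u i o 1, GVert.v i o 1), s(GVert.u i o 2, GVert.v i o 2)}

lemma ncard_gadgetEdges (i : Fin n) (o : Bool) : (gadgetEdges i o).ncard = 6 := by
  simp [gadgetEdges, ncard_insert_of_notMem]

lemma gadgetGraph_adj_iff {a b : GVert n} :
    (gadgetGraph cl).Adj a b ↔ a ≠ b ∧ (EdgeSpec cl a b ∨ EdgeSpec cl b a) :=
  fromRel_adj _ _ _

lemma gadgetGraph_neighborSet_s :
    (gadgetGraph cl).neighborSet .s =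
      range (fun p : Fin n × Bool × Fin 3 => GVert.u p.1 p.2.1 p.2.2) := by
  ext w
  simp only [mem_neighborSet, gadgetGraph_adj_iff, mem_range]
  constructor
  · rintro ⟨-, h | h⟩
    · cases h; exact ⟨(_, _, _), rfl⟩
    · cases h
  · rintro ⟨p, rfl⟩
    exact ⟨by simp, Or.inl (.star _ _ _)⟩

lemma gadgetGraph_ncard_neighborSet_s : ((gadgetGraph cl).neighborSet .s).ncard = 6 * n := by
  rw [gadgetGraph_neighborSet_s, ncard_range_of_injective]
  · simp only [Nat.card_eq_fintype_card, Fintype.card_prod, Fintype.card_fin, Fintype.card_bool]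
    ring
  · rintro ⟨i, o, j⟩ ⟨i', o', j'⟩ h
    cases h
    rfl

lemma gadgetGraph_adj_u {i : Fin n} {o : Bool} {j : Fin 3} {w : GVert n}
    (h : (gadgetGraph cl).Adj (.u i o j) w) :
    w = .s ∨ (∃ j', j ≠ j' ∧ w = .u i o j') ∨ w = .v i o j := by
  rcases ((gadgetGraph_adj_iff cl).mp h).2 with h' | h'
  · cases h' with
    | tri _ _ hne => exact Or.inr (Or.inl ⟨_, hne, rfl⟩)
    | mat => exact Or.inr (Or.inr rfl)
  · cases h' with
    | star => exact Or.inl rfl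
    | tri _ _ hne => exact Or.inr (Or.inl ⟨_, hne.symm, rfl⟩)

lemma gadgetEdges_subset (i : Fin n) (o : Bool) :
    gadgetEdges i o ⊆ (gadgetGraph cl).edgeSet := by
  rintro e (rfl | rfl | rfl | rfl | rfl | rfl) <;>
    refine (gadgetGraph_adj_iff cl).mpr ⟨by simp, Or.inl ?_⟩
  all_goals first | exact .tri i o (by decide) | exact .mat i o _

lemma ncard_gadgetEdges_inter_eq_three {T : SimpleGraph (GVert n)} (hT : T ≤ gadgetGraph cl)
    {m : GVert n → ℕ} {d : GVert n → GVert n → Prop} (hd : IsMOrientation T.edgeSet m d)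
    (hs : ∀ x, ¬ d x .s) (i : Fin n) (o : Bool) (hu : ∀ j, m (.u i o j) = 1)
    (hv : ∀ j, m (.v i o j) = 0) : (gadgetEdges i o ∩ T.edgeSet).ncard = 3 := by
  have hv_out : ∀ j w, ¬ d (.v i o j) w := fun j w hw => by
    have : Nonempty {w // d (.v i o j) w} := ⟨⟨w, hw⟩⟩
    simpa [hd.2, hv] using (Nat.card_pos : 0 < Nat.card {w // d (.v i o j) w})
  have hU : (range (GVert.u i o)).ncard = 3 := by
    rw [ncard_range_of_injective fun _ _ h => by cases h; rfl, Nat.card_fin]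
  rw [← hU]
  refine ncard_inter_eq_of_unique_out hd.1 ?_ ?_ ?_
  · rintro _ ⟨j, rfl⟩
    rw [hd.2, hu]
  · rintro _ ⟨j, rfl⟩ w hw
    rcases gadgetGraph_adj_u cl (hT (hd.1.1 _ _ hw)) with rfl | ⟨j', hne, rfl⟩ | rfl
    · exact absurd hw (hs _)
    · fin_cases j <;> fin_cases j' <;> simp_all [gadgetEdges, Sym2.eq_swap]
    · fin_cases j <;> simp [gadgetEdges]
  · intro a b hab had
    rcases hab with h | h | h | h | h | h <;>
      rcases Sym2.eq_iff.mp h with ⟨rfl, rfl⟩ | ⟨rfl, rfl⟩ <;>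
      first | exact ⟨_, rfl⟩ | exact absurd had (hv_out _ _)

end Gadget

theorem stmt8_general {α : Type*} [DecidableEq α] {n : ℕ} (cl : Fin n → Fin 3 → α)
    (B R : SimpleGraph (GVert n))
    (hBR : IsBRPartition (gadgetGraph cl) (bvec n) (rvec n) B R) :
    ∀ (i : Fin n) (o : Bool),
      (({s(GVert.u i o 0, GVert.u i o 1), s(GVert.u i o 1, GVert.u i o 2),
          s(GVert.u i o 0, GVert.u i o 2), s(GVert.u i o 0, GVert.v i o 0),
          s(GVert.u i o 1, GVert.v i o 1), s(GVert.u i o 2, GVert.v i o 2)} :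
          Set (Sym2 (GVert n))) ∩ B.edgeSet).ncard = 3 ∧
      (({s(GVert.u i o 0, GVert.u i o 1), s(GVert.u i o 1, GVert.u i o 2),
          s(GVert.u i o 0, GVert.u i o 2), s(GVert.u i o 0, GVert.v i o 0),
          s(GVert.u i o 1, GVert.v i o 1), s(GVert.u i o 2, GVert.v i o 2)} :
          Set (Sym2 (GVert n))) ∩ R.edgeSet).ncard = 3 := by
  obtain ⟨⟨hB, hR, -, -, hdisj, hunion⟩, ⟨dB, hdB⟩, ⟨dR, hdR⟩⟩ := hBR
  have hfin : ((gadgetGraph cl).neighborSet .s).Finite :=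
    gadgetGraph_neighborSet_s cl ▸ finite_range _
  have hcard : Nat.card {w // dB .s w} + Nat.card {w // dR .s w} =
      ((gadgetGraph cl).neighborSet .s).ncard := by
    rw [hdB.2, hdR.2, gadgetGraph_ncard_neighborSet_s, bvec, rvec]
    ring
  have hsB := not_dir_into_of_card_out_add_card_out hB hR hdisj hdB.1 hdR.1 hfin hcard
  have hsR := not_dir_into_of_card_out_add_card_out hR hB hdisj.symm hdR.1 hdB.1 hfin
    (by rw [add_comm, hcard])
  intro i o
  change (gadgetEdges i o ∩ _).ncard = 3 ∧ (gadgetEdges i o ∩ _).ncard = 3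
  have hsplit := ncard_inter_add_ncard_inter_of_subset_union (toFinite _) hdisj
    ((gadgetEdges_subset cl i o).trans hunion.ge)
  rw [ncard_gadgetEdges] at hsplit
  cases o
  · have := ncard_gadgetEdges_inter_eq_three cl hR hdR hsR i false (fun _ => rfl) (fun _ => rfl)
    omega
  · have := ncard_gadgetEdges_inter_eq_three cl hB hdB hsB i true (fun _ => rfl) (fun _ => rfl)
    omega

/-- In every `(b,r)`-partition of `G(Π)`, for every clause
gadget (original or copy), among the six edges formed by the triangle on
`U^C` together with the matching `E^C`, exactly three are blue and exactly
three are red. -/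
theorem stmt8 {α : Type*} [DecidableEq α] {n : ℕ} (cl : Fin n → Fin 3 → α)
    (hcl : ∀ i, Function.Injective (cl i)) (B R : SimpleGraph (GVert n))
    (hBR : IsBRPartition (gadgetGraph cl) (bvec n) (rvec n) B R) :
    ∀ (i : Fin n) (o : Bool),
      (({s(GVert.u i o 0, GVert.u i o 1), s(GVert.u i o 1, GVert.u i o 2),
          s(GVert.u i o 0, GVert.u i o 2), s(GVert.u i o 0, GVert.v i o 0),
          s(GVert.u i o 1, GVert.v i o 1), s(GVert.u i o 2, GVert.v i o 2)} :
          Set (Sym2 (GVert n))) ∩ B.edgeSet).ncard = 3 ∧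
      (({s(GVert.u i o 0, GVert.u i o 1), s(GVert.u i o 1, GVert.u i o 2),
          s(GVert.u i o 0, GVert.u i o 2), s(GVert.u i o 0, GVert.v i o 0),
          s(GVert.u i o 1, GVert.v i o 1), s(GVert.u i o 2, GVert.v i o 2)} :
          Set (Sym2 (GVert n))) ∩ R.edgeSet).ncard = 3 :=
  stmt8_general cl B R hBR
end

section
/- Let Π be an instance of NotAllEqual 3-SAT with n clauses and G(Π)=(V,E), b, r the associated construction. In every (b,r)-partition of E, with any b-orientation of the blue tree and r-orientation of the red tree, for every variable x the edges of the cycle Δ_x are oriented so that Δ_x becomes a directed cycle, and the colors of the edges alternate between blue and red along Δ_x. -/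
/-- The edge `s(a, b)` of the partitioned graph is oriented from `a` to `b`
(in the orientation of whichever tree contains it). -/
def OrientedTo {V : Type*} (B R : SimpleGraph V) (db dr : V → V → Prop)
    (a b : V) : Prop :=
  (s(a, b) ∈ B.edgeSet ∧ db a b) ∨ (s(a, b) ∈ R.edgeSet ∧ dr a b)

/-!
The two orientations together form one orientation of `G(Π)` with outdegree `b + r`. The special
vertex `s` has outdegree `6n` and only `6n` neighbours, so every edge at `s` leaves `s`. A
`u`-vertex has outdegree `2` and at most four neighbours, so besides the arc from `s` it receives at
most one arc; were a matching edge oriented into its `u`-vertex, the triangle above it could not be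
oriented. Hence every `v`-vertex has its single outgoing arc on its cycle `Δ_x`, which makes `Δ_x` a
directed cycle. That arc is blue at the `v`-vertices of original gadgets (`r = 0` there) and red at
those of copy gadgets (`b = 0`), and the two kinds alternate along `Δ_x`.
-/

namespace IsOrientation

variable {V : Type*} {F : Set (Sym2 V)} {G : SimpleGraph V} {d : V → V → Prop} {a b : V}

theorem asymm (hd : IsOrientation F d) (h : d a b) : ¬ d b a :=
  fun h' => (hd.2 a b (hd.1 a b h)).2 ⟨h, h'⟩

theorem adj (hd : IsOrientation G.edgeSet d) (h : d a b) : G.Adj a b :=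
  hd.1 a b h

theorem total (hd : IsOrientation G.edgeSet d) (h : G.Adj a b) : d a b ∨ d b a :=
  (hd.2 a b h).1

end IsOrientation

namespace IsMOrientation

variable {V : Type*} {F F₁ F₂ : Set (Sym2 V)} {G : SimpleGraph V}
  {m m₁ m₂ : V → ℕ} {d d₁ d₂ : V → V → Prop} {a : V}

theorem not_apply_of_eq_zero [Finite V] (hd : IsMOrientation F m d) (h : m a = 0) (b : V) :
    ¬ d a b :=
  fun hb => (Nat.card_pos_iff.2 ⟨⟨⟨b, hb⟩⟩, inferInstance⟩).ne' ((hd.2 a).trans h)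

theorem exists_apply_of_ne_zero (hd : IsMOrientation F m d) (h : m a ≠ 0) : ∃ b, d a b :=
  let ⟨⟨b, hb⟩⟩ := (Nat.card_ne_zero.1 ((hd.2 a).trans_ne h)).1
  ⟨b, hb⟩

theorem union [Finite V] (h₁ : IsMOrientation F₁ m₁ d₁) (h₂ : IsMOrientation F₂ m₂ d₂)
    (hF : Disjoint F₁ F₂) :
    IsMOrientation (F₁ ∪ F₂) (m₁ + m₂) (fun a b => d₁ a b ∨ d₂ a b) := by
  have only₁ : ∀ a b, s(a, b) ∈ F₁ → (d₁ a b ∨ d₂ a b ↔ d₁ a b) := fun a b he =>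
    or_iff_left fun h => Set.disjoint_left.1 hF he (h₂.1.1 a b h)
  have only₂ : ∀ a b, s(a, b) ∈ F₂ → (d₁ a b ∨ d₂ a b ↔ d₂ a b) := fun a b he =>
    or_iff_right fun h => Set.disjoint_right.1 hF he (h₁.1.1 a b h)
  refine ⟨⟨fun a b => Or.imp (h₁.1.1 a b) (h₂.1.1 a b), ?_⟩, fun a => ?_⟩
  · rintro a b (he | he) <;> beta_reduce
    · rw [only₁ a b he, only₁ b a (Sym2.eq_swap ▸ he)]
      exact h₁.1.2 a b he
    · rw [only₂ a b he, only₂ b a (Sym2.eq_swap ▸ he)]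
      exact h₂.1.2 a b he
  · classical
    have hdisj : Disjoint (d₁ a) (d₂ a) := by
      simp only [Pi.disjoint_iff, Prop.disjoint_iff]
      exact fun b ⟨hb₁, hb₂⟩ => Set.disjoint_left.1 hF (h₁.1.1 a b hb₁) (h₂.1.1 a b hb₂)
    rw [Nat.card_congr (subtypeOrEquiv _ _ hdisj), Nat.card_sum, h₁.2, h₂.2, Pi.add_apply]

theorem ncard_neighborSet [Finite V] (hd : IsMOrientation G.edgeSet m d) (a : V) :
    (G.neighborSet a).ncard = m a + {b | d b a}.ncard := by
  have hsplit : G.neighborSet a = {b | d a b} ∪ {b | d b a} := by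
    ext b
    exact ⟨hd.1.total, fun h => h.elim hd.1.adj fun h => (hd.1.adj h).symm⟩
  rw [hsplit, Set.ncard_union_eq (s := {b | d a b}) (t := {b | d b a})
    (Set.disjoint_left.2 fun b => hd.1.asymm), ← Nat.card_coe_set_eq, ← hd.2 a]
  rfl

theorem not_apply_of_ncard_neighborSet_le [Finite V] (hd : IsMOrientation G.edgeSet m d)
    (h : (G.neighborSet a).ncard ≤ m a) (b : V) : ¬ d b a := by
  have hin : {b | d b a}.ncard = 0 := by
    have := hd.ncard_neighborSet a
    omega
  exact fun hb => ((Set.ncard_eq_zero).1 hin).subset hb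

end IsMOrientation

section Occurrences

variable {α : Type*} [DecidableEq α] {n : ℕ} (cl : Fin n → Fin 3 → α)

theorem mem_occs {x : α} {p : Fin n × Fin 3} : p ∈ occs cl x ↔ cl p.1 p.2 = x := by
  simp [occs]

theorem nextOcc_eq_formPerm (p : Fin n × Fin 3) :
    nextOcc cl p = (occs cl (cl p.1 p.2)).toList.formPerm p :=
  (List.formPerm_apply_mem_eq_next (Finset.nodup_toList _) p _).symm

theorem nextOcc_mem_occs_self (p : Fin n × Fin 3) : nextOcc cl p ∈ occs cl (cl p.1 p.2) :=
  Finset.mem_toList.1 (List.next_mem _ _ _)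

theorem nextOcc_mem_occs {x : α} {p : Fin n × Fin 3} (hp : p ∈ occs cl x) :
    nextOcc cl p ∈ occs cl x :=
  (mem_occs cl).1 hp ▸ nextOcc_mem_occs_self cl p

theorem nextOcc_injective : Function.Injective (nextOcc cl) := by
  intro p q h
  have hpq : cl p.1 p.2 = cl q.1 q.2 := by
    rw [← (mem_occs cl).1 (nextOcc_mem_occs_self cl p), h,
      (mem_occs cl).1 (nextOcc_mem_occs_self cl q)]
  rw [nextOcc_eq_formPerm, nextOcc_eq_formPerm, hpq] at h
  exact (List.formPerm _).injective h

theorem forall_mem_occs_of_nextOcc {x : α} {P : Fin n × Fin 3 → Prop}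
    (hP : ∀ p ∈ occs cl x, P p → P (nextOcc cl p)) {p : Fin n × Fin 3} (hp : p ∈ occs cl x)
    (hPp : P p) : ∀ q ∈ occs cl x, P q := by
  intro q hq
  obtain ⟨i, hi, rfl⟩ := List.getElem_of_mem (Finset.mem_toList.2 hp)
  obtain ⟨j, hj, rfl⟩ := List.getElem_of_mem (Finset.mem_toList.2 hq)
  set l := (occs cl x).toList
  have hiter : ∀ k, (l.formPerm ^ k) l[i] ∈ occs cl x ∧ P ((l.formPerm ^ k) l[i]) := by
    intro k
    induction k with
    | zero => exact ⟨hp, hPp⟩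
    | succ k ih =>
      have hnext : l.formPerm ((l.formPerm ^ k) l[i]) = nextOcc cl ((l.formPerm ^ k) l[i]) := by
        rw [nextOcc_eq_formPerm, (mem_occs cl).1 ih.1]
      rw [pow_succ', Equiv.Perm.mul_apply, hnext]
      exact ⟨nextOcc_mem_occs cl ih.1, hP _ ih.1 ih.2⟩
  convert (hiter (l.length - i + j)).2 using 1
  rw [List.formPerm_pow_apply_getElem _ (Finset.nodup_toList _)]
  congr 1
  rw [show i + (l.length - i + j) = j + l.length by omega, Nat.add_mod_right, Nat.mod_eq_of_lt hj]

end Occurrences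

instance {n : ℕ} : Finite (GVert n) :=
  Finite.of_surjective
    (fun t : Option (Bool × Fin n × Bool × Fin 3) =>
      match t with
      | none => .s
      | some (false, i, o, j) => .u i o j
      | some (true, i, o, j) => .v i o j)
    (by
      rintro (_ | ⟨i, o, j⟩ | ⟨i, o, j⟩)
      exacts [⟨none, rfl⟩, ⟨some (false, i, o, j), rfl⟩, ⟨some (true, i, o, j), rfl⟩])

theorem Fin.eq_add_one_or_eq_add_two_of_ne {j j' : Fin 3} (h : j' ≠ j) :
    j' = j + 1 ∨ j' = j + 2 := by
  revert j j'
  decide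

section GadgetGraph

variable {α : Type*} [DecidableEq α] {n : ℕ} {cl : Fin n → Fin 3 → α}

theorem gadgetGraph_adj_s_u (i : Fin n) (o : Bool) (j : Fin 3) :
    (gadgetGraph cl).Adj .s (.u i o j) :=
  (SimpleGraph.fromRel_adj _ _ _).2 ⟨nofun, Or.inl (.star i o j)⟩

theorem gadgetGraph_adj_u_u (i : Fin n) (o : Bool) {j j' : Fin 3} (h : j ≠ j') :
    (gadgetGraph cl).Adj (.u i o j) (.u i o j') :=
  (SimpleGraph.fromRel_adj _ _ _).2 ⟨by simpa using h, Or.inl (.tri i o h)⟩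

theorem gadgetGraph_adj_u_v (i : Fin n) (o : Bool) (j : Fin 3) :
    (gadgetGraph cl).Adj (.u i o j) (.v i o j) :=
  (SimpleGraph.fromRel_adj _ _ _).2 ⟨nofun, Or.inl (.mat i o j)⟩

theorem gadgetGraph_adj_v_v (p : Fin n × Fin 3) :
    (gadgetGraph cl).Adj (.v p.1 false p.2) (.v p.1 true p.2) :=
  (SimpleGraph.fromRel_adj _ _ _).2 ⟨by simp, Or.inl (.cycA p)⟩

theorem ncard_neighborSet_s_le :
    ((gadgetGraph cl).neighborSet .s).ncard ≤ (bvec n + rvec n) .s := by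
  have hsub : (gadgetGraph cl).neighborSet .s ⊆
      Set.range (fun t : Fin n × Bool × Fin 3 => GVert.u t.1 t.2.1 t.2.2) := by
    intro w hw
    obtain ⟨-, h | h⟩ := (SimpleGraph.fromRel_adj _ _ _).1 hw
    · cases h with
      | star i o j => exact ⟨(i, o, j), rfl⟩
    · cases h
  have hinj : Function.Injective (fun t : Fin n × Bool × Fin 3 => GVert.u t.1 t.2.1 t.2.2) := by
    rintro ⟨i, o, j⟩ ⟨i', o', j'⟩ h
    simp_all
  refine (Set.ncard_le_ncard hsub).trans_eq ?_
  rw [Set.ncard_range_of_injective hinj, Nat.card_eq_fintype_card]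
  simp only [Fintype.card_prod, Fintype.card_fin, Fintype.card_bool, Pi.add_apply, bvec, rvec]
  ring

theorem ncard_neighborSet_u_le (i : Fin n) (o : Bool) (j : Fin 3) :
    ((gadgetGraph cl).neighborSet (.u i o j)).ncard ≤ 4 := by
  have hsub : (gadgetGraph cl).neighborSet (.u i o j) ⊆
      {.s, .v i o j, .u i o (j + 1), .u i o (j + 2)} := by
    intro w hw
    obtain ⟨-, h | h⟩ := (SimpleGraph.fromRel_adj _ _ _).1 hw
    · cases h with
      | tri _ _ h => simp [Fin.eq_add_one_or_eq_add_two_of_ne (Ne.symm h)]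
      | mat => simp
    · cases h with
      | star => simp
      | tri _ _ h => simp [Fin.eq_add_one_or_eq_add_two_of_ne h]
  refine (Set.ncard_le_ncard hsub).trans ?_
  have h₁ := Set.ncard_insert_le (GVert.s (n := n)) {.v i o j, .u i o (j + 1), .u i o (j + 2)}
  have h₂ := Set.ncard_insert_le (GVert.v i o j) {.u i o (j + 1), .u i o (j + 2)}
  have h₃ := Set.ncard_insert_le (GVert.u i o (j + 1)) {.u i o (j + 2)}
  rw [Set.ncard_singleton] at h₃
  omega

theorem eq_of_gadgetGraph_adj_v_false {i : Fin n} {j : Fin 3} {w : GVert n}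
    (h : (gadgetGraph cl).Adj (.v i false j) w) :
    w = .u i false j ∨ w = .v i true j ∨ ∃ q, nextOcc cl q = (i, j) ∧ w = .v q.1 true q.2 := by
  obtain ⟨-, h | h⟩ := (SimpleGraph.fromRel_adj _ _ _).1 h
  · cases h with
    | cycA => simp
  · cases h with
    | mat => simp
    | cycB q => exact Or.inr (Or.inr ⟨q, rfl, rfl⟩)

theorem eq_of_gadgetGraph_adj_v_true {p : Fin n × Fin 3} {w : GVert n}
    (h : (gadgetGraph cl).Adj (.v p.1 true p.2) w) :
    w = .u p.1 true p.2 ∨ w = .v p.1 false p.2 ∨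
      w = .v (nextOcc cl p).1 false (nextOcc cl p).2 := by
  obtain ⟨i, j⟩ := p
  obtain ⟨-, h | h⟩ := (SimpleGraph.fromRel_adj _ _ _).1 h
  · cases h with
    | cycB => simp
  · cases h with
    | mat => simp
    | cycA => simp

end GadgetGraph

section GadgetOrientation

variable {α : Type*} [DecidableEq α] {n : ℕ} {cl : Fin n → Fin 3 → α}
  {d : GVert n → GVert n → Prop}

theorem not_apply_to_s (hd : IsMOrientation (gadgetGraph cl).edgeSet (bvec n + rvec n) d)
    (w : GVert n) : ¬ d w .s :=
  hd.not_apply_of_ncard_neighborSet_le ncard_neighborSet_s_le w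

theorem eq_of_apply_u (hd : IsMOrientation (gadgetGraph cl).edgeSet (bvec n + rvec n) d)
    {i : Fin n} {o : Bool} {j : Fin 3} {w₁ w₂ : GVert n} (h₁ : d w₁ (.u i o j))
    (h₂ : d w₂ (.u i o j)) (hw₁ : w₁ ≠ .s) (hw₂ : w₂ ≠ .s) : w₁ = w₂ := by
  by_contra hne
  have hs : d .s (.u i o j) :=
    (hd.1.total (gadgetGraph_adj_s_u i o j)).resolve_right (not_apply_to_s hd _)
  have hsub : {.s, w₁, w₂} ⊆ {w | d w (.u i o j)} := by
    rintro _ (rfl | rfl | rfl) <;> assumption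
  have hthree : ({.s, w₁, w₂} : Set (GVert n)).ncard = 3 :=
    Set.ncard_eq_three.2 ⟨_, _, _, hw₁.symm, hw₂.symm, hne, rfl⟩
  have hdeg := hd.ncard_neighborSet (.u i o j)
  have := Set.ncard_le_ncard hsub
  have := ncard_neighborSet_u_le (cl := cl) i o j
  simp only [Pi.add_apply, bvec, rvec] at hdeg
  omega

theorem apply_u_v (hd : IsMOrientation (gadgetGraph cl).edgeSet (bvec n + rvec n) d)
    (i : Fin n) (o : Bool) (j : Fin 3) : d (.u i o j) (.v i o j) := by
  obtain ⟨hne₁, hne₂, hne₁₂⟩ : j ≠ j + 1 ∧ j ≠ j + 2 ∧ j + 1 ≠ j + 2 := by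
    revert j
    decide
  refine (hd.1.total (gadgetGraph_adj_u_v i o j)).resolve_right fun hvu => ?_
  -- With `v → u j`, both triangle edges leave `u j`, which forces `u (j + 1) → u (j + 2)`;
  -- then `u (j + 2)` receives two arcs from the triangle.
  have h₁ : d (.u i o j) (.u i o (j + 1)) :=
    (hd.1.total (gadgetGraph_adj_u_u i o hne₁)).resolve_right fun h =>
      nomatch eq_of_apply_u hd hvu h nofun nofun
  have h₂ : d (.u i o j) (.u i o (j + 2)) :=
    (hd.1.total (gadgetGraph_adj_u_u i o hne₂)).resolve_right fun h =>
      nomatch eq_of_apply_u hd hvu h nofun nofun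
  have h₁₂ : d (.u i o (j + 1)) (.u i o (j + 2)) :=
    (hd.1.total (gadgetGraph_adj_u_u i o hne₁₂)).resolve_right fun h =>
      hne₂ (by simpa using eq_of_apply_u hd h₁ h nofun nofun)
  exact hne₁ (by simpa using eq_of_apply_u hd h₂ h₁₂ nofun nofun)

theorem exists_apply_v (hd : IsMOrientation (gadgetGraph cl).edgeSet (bvec n + rvec n) d)
    (i : Fin n) (o : Bool) (j : Fin 3) : ∃ w, d (.v i o j) w :=
  hd.exists_apply_of_ne_zero (by cases o <;> simp [bvec, rvec])

theorem eq_of_apply_v_false (hd : IsMOrientation (gadgetGraph cl).edgeSet (bvec n + rvec n) d)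
    {p : Fin n × Fin 3} {w : GVert n}
    (h : d (.v (nextOcc cl p).1 false (nextOcc cl p).2) w) :
    w = .v (nextOcc cl p).1 true (nextOcc cl p).2 ∨ w = .v p.1 true p.2 := by
  rcases eq_of_gadgetGraph_adj_v_false (hd.1.adj h) with rfl | rfl | ⟨q, hq, rfl⟩
  · exact absurd h (hd.1.asymm (apply_u_v hd _ _ _))
  · exact Or.inl rfl
  · exact Or.inr (by rw [nextOcc_injective cl hq])

theorem eq_of_apply_v_true (hd : IsMOrientation (gadgetGraph cl).edgeSet (bvec n + rvec n) d)
    {p : Fin n × Fin 3} {w : GVert n} (h : d (.v p.1 true p.2) w) :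
    w = .v p.1 false p.2 ∨ w = .v (nextOcc cl p).1 false (nextOcc cl p).2 := by
  rcases eq_of_gadgetGraph_adj_v_true (hd.1.adj h) with rfl | h' | h'
  · exact absurd h (hd.1.asymm (apply_u_v hd _ _ _))
  · exact Or.inl h'
  · exact Or.inr h'

end GadgetOrientation

section Cycle

variable {α : Type*} [DecidableEq α] {n : ℕ} {cl : Fin n → Fin 3 → α}
  {d : GVert n → GVert n → Prop}

theorem cycle_forward_of_apply (hd : IsMOrientation (gadgetGraph cl).edgeSet (bvec n + rvec n) d)
    {p : Fin n × Fin 3} (h : d (.v p.1 false p.2) (.v p.1 true p.2)) :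
    d (.v p.1 true p.2) (.v (nextOcc cl p).1 false (nextOcc cl p).2) ∧
      d (.v (nextOcc cl p).1 false (nextOcc cl p).2)
        (.v (nextOcc cl p).1 true (nextOcc cl p).2) := by
  obtain ⟨w, hw⟩ := exists_apply_v hd p.1 true p.2
  have hcopy : d (.v p.1 true p.2) (.v (nextOcc cl p).1 false (nextOcc cl p).2) := by
    rcases eq_of_apply_v_true hd hw with rfl | rfl
    · exact absurd hw (hd.1.asymm h)
    · exact hw
  obtain ⟨w', hw'⟩ := exists_apply_v hd (nextOcc cl p).1 false (nextOcc cl p).2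
  refine ⟨hcopy, ?_⟩
  rcases eq_of_apply_v_false hd hw' with rfl | rfl
  · exact hw'
  · exact absurd hw' (hd.1.asymm hcopy)

theorem cycle_backward_of_not_apply
    (hd : IsMOrientation (gadgetGraph cl).edgeSet (bvec n + rvec n) d) {p : Fin n × Fin 3}
    (h : ¬ d (.v p.1 false p.2) (.v p.1 true p.2))
    (hnext : ¬ d (.v (nextOcc cl p).1 false (nextOcc cl p).2)
      (.v (nextOcc cl p).1 true (nextOcc cl p).2)) :
    d (.v p.1 true p.2) (.v p.1 false p.2) ∧
      d (.v (nextOcc cl p).1 false (nextOcc cl p).2) (.v p.1 true p.2) := by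
  refine ⟨(hd.1.total (gadgetGraph_adj_v_v p)).resolve_left h, ?_⟩
  obtain ⟨w, hw⟩ := exists_apply_v hd (nextOcc cl p).1 false (nextOcc cl p).2
  rcases eq_of_apply_v_false hd hw with rfl | rfl
  · exact absurd hw hnext
  · exact hw

theorem cycle_directed (hd : IsMOrientation (gadgetGraph cl).edgeSet (bvec n + rvec n) d)
    (x : α) :
    (∀ p ∈ occs cl x, d (.v p.1 false p.2) (.v p.1 true p.2) ∧
        d (.v p.1 true p.2) (.v (nextOcc cl p).1 false (nextOcc cl p).2)) ∨
      ∀ p ∈ occs cl x, d (.v p.1 true p.2) (.v p.1 false p.2) ∧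
        d (.v (nextOcc cl p).1 false (nextOcc cl p).2) (.v p.1 true p.2) := by
  by_cases hfwd : ∃ p ∈ occs cl x, d (.v p.1 false p.2) (.v p.1 true p.2)
  · obtain ⟨p, hp, hdp⟩ := hfwd
    have hall := forall_mem_occs_of_nextOcc cl
      (P := fun q => d (.v q.1 false q.2) (.v q.1 true q.2))
      (fun q _ hq => (cycle_forward_of_apply hd hq).2) hp hdp
    exact Or.inl fun q hq => ⟨hall q hq, (cycle_forward_of_apply hd (hall q hq)).1⟩
  · push Not at hfwd
    exact Or.inr fun p hp =>
      cycle_backward_of_not_apply hd (hfwd p hp) (hfwd _ (nextOcc_mem_occs cl hp))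

end Cycle

section Coloring

variable {n : ℕ} {B R : SimpleGraph (GVert n)} {db dr : GVert n → GVert n → Prop}
  {i : Fin n} {j : Fin 3} {w : GVert n}

theorem orientedTo_blue_of_v_false (hb : IsMOrientation B.edgeSet (bvec n) db)
    (hr : IsMOrientation R.edgeSet (rvec n) dr)
    (h : db (.v i false j) w ∨ dr (.v i false j) w) :
    OrientedTo B R db dr (.v i false j) w ∧ s(.v i false j, w) ∈ B.edgeSet := by
  have hdb := h.resolve_right (hr.not_apply_of_eq_zero rfl w)
  exact ⟨Or.inl ⟨hb.1.1 _ _ hdb, hdb⟩, hb.1.1 _ _ hdb⟩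

theorem orientedTo_red_of_v_true (hb : IsMOrientation B.edgeSet (bvec n) db)
    (hr : IsMOrientation R.edgeSet (rvec n) dr)
    (h : db (.v i true j) w ∨ dr (.v i true j) w) :
    OrientedTo B R db dr (.v i true j) w ∧ s(.v i true j, w) ∈ R.edgeSet := by
  have hdr := h.resolve_left (hb.not_apply_of_eq_zero rfl w)
  exact ⟨Or.inr ⟨hr.1.1 _ _ hdr, hdr⟩, hr.1.1 _ _ hdr⟩

end Coloring

theorem stmt11_general {α : Type*} [DecidableEq α] {n : ℕ} (cl : Fin n → Fin 3 → α)
    (B R : SimpleGraph (GVert n))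
    (hpart : IsTreePartition (gadgetGraph cl) B R)
    (db dr : GVert n → GVert n → Prop)
    (hb : IsMOrientation B.edgeSet (bvec n) db)
    (hr : IsMOrientation R.edgeSet (rvec n) dr) :
    ∀ x : α,
      ((∀ p ∈ occs cl x,
          OrientedTo B R db dr (GVert.v p.1 false p.2) (GVert.v p.1 true p.2) ∧
          OrientedTo B R db dr (GVert.v p.1 true p.2)
            (GVert.v (nextOcc cl p).1 false (nextOcc cl p).2)) ∨
       (∀ p ∈ occs cl x,
          OrientedTo B R db dr (GVert.v p.1 true p.2) (GVert.v p.1 false p.2) ∧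
          OrientedTo B R db dr (GVert.v (nextOcc cl p).1 false (nextOcc cl p).2)
            (GVert.v p.1 true p.2))) ∧
      ((∀ p ∈ occs cl x,
          s(GVert.v p.1 false p.2, GVert.v p.1 true p.2) ∈ B.edgeSet ∧
          s(GVert.v p.1 true p.2,
            GVert.v (nextOcc cl p).1 false (nextOcc cl p).2) ∈ R.edgeSet) ∨
       (∀ p ∈ occs cl x,
          s(GVert.v p.1 false p.2, GVert.v p.1 true p.2) ∈ R.edgeSet ∧
          s(GVert.v p.1 true p.2,
            GVert.v (nextOcc cl p).1 false (nextOcc cl p).2) ∈ B.edgeSet)) := by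
  intro x
  obtain ⟨-, -, -, -, hdisj, hunion⟩ := hpart
  have hd := hunion ▸ hb.union hr hdisj
  rcases cycle_directed hd x with hfwd | hbwd
  · have blue p hp := orientedTo_blue_of_v_false hb hr (hfwd p hp).1
    have red p hp := orientedTo_red_of_v_true hb hr (hfwd p hp).2
    exact ⟨Or.inl fun p hp => ⟨(blue p hp).1, (red p hp).1⟩,
      Or.inl fun p hp => ⟨(blue p hp).2, (red p hp).2⟩⟩
  · have red p hp := orientedTo_red_of_v_true hb hr (hbwd p hp).1
    have blue p hp := orientedTo_blue_of_v_false hb hr (hbwd p hp).2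
    exact ⟨Or.inr fun p hp => ⟨(red p hp).1, (blue p hp).1⟩,
      Or.inr fun p hp => ⟨Sym2.eq_swap ▸ (red p hp).2, Sym2.eq_swap ▸ (blue p hp).2⟩⟩

/-- In every `(b,r)`-partition of `G(Π)`, with any
`b`-orientation of the blue tree and `r`-orientation of the red tree, for
every variable `x` the cycle `Δ_x` is oriented as a directed cycle (all its
edges are oriented consistently one way around, i.e. all forward or all
backward), and its edges alternate in color between blue and red (the edges
`v p false — v p true` all get one color and the edges
`v p true — v (nextOcc p) false` all get the other). -/
theorem stmt11 {α : Type*} [DecidableEq α] {n : ℕ} (cl : Fin n → Fin 3 → α)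
    (hcl : ∀ i, Function.Injective (cl i)) (B R : SimpleGraph (GVert n))
    (hpart : IsTreePartition (gadgetGraph cl) B R)
    (db dr : GVert n → GVert n → Prop)
    (hb : IsMOrientation B.edgeSet (bvec n) db)
    (hr : IsMOrientation R.edgeSet (rvec n) dr) :
    ∀ x : α,
      ((∀ p ∈ occs cl x,
          OrientedTo B R db dr (GVert.v p.1 false p.2) (GVert.v p.1 true p.2) ∧
          OrientedTo B R db dr (GVert.v p.1 true p.2)
            (GVert.v (nextOcc cl p).1 false (nextOcc cl p).2)) ∨
       (∀ p ∈ occs cl x,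
          OrientedTo B R db dr (GVert.v p.1 true p.2) (GVert.v p.1 false p.2) ∧
          OrientedTo B R db dr (GVert.v (nextOcc cl p).1 false (nextOcc cl p).2)
            (GVert.v p.1 true p.2))) ∧
      ((∀ p ∈ occs cl x,
          s(GVert.v p.1 false p.2, GVert.v p.1 true p.2) ∈ B.edgeSet ∧
          s(GVert.v p.1 true p.2,
            GVert.v (nextOcc cl p).1 false (nextOcc cl p).2) ∈ R.edgeSet) ∨
       (∀ p ∈ occs cl x,
          s(GVert.v p.1 false p.2, GVert.v p.1 true p.2) ∈ R.edgeSet ∧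
          s(GVert.v p.1 true p.2,
            GVert.v (nextOcc cl p).1 false (nextOcc cl p).2) ∈ B.edgeSet)) :=
  stmt11_general cl B R hpart db dr hb hr
end
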